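/- arXiv:2402.02605 — 3 statements merged into one kernel-verified Lean document; each statement's English description precedes it below -/
import Mathlib

section
/- Assume condition (*): for every morphism f : x → y in D, the equivalence class {g : s(g)=s(f)} equals Id_y ∘ f and equals f ∘ Id_x. Then for any f ∈ Mor D and any s₀ ∈ S there exist s', s'' ∈ S with s₀·f = f·s' and f·s₀ = s''·f in the category algebra kD. -/
open CategoryTheory

variable (k : Type) [Field k]

variable (D : Type) [SmallCategory D] [Fintype D] [DecidableEq D]
  [∀ x y : D, Fintype (x ⟶ y)] [∀ x y : D, DecidableEq (x ⟶ y)]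
variable (C : Type) [SmallCategory C] [Fintype C] [DecidableEq C]
  [∀ x y : C, Fintype (x ⟶ y)] [∀ x y : C, DecidableEq (x ⟶ y)]

/-- The set of morphisms of a category, as a sigma type. -/
abbrev Mor (C : Type) [SmallCategory C] : Type := Σ x y : C, x ⟶ y

/-- Composition of composable morphisms: `compMor g f h = g ∘ f` when `d(g) = c(f)`. -/
def compMor {C : Type} [SmallCategory C] (g f : Mor C) (h : g.1 = f.2.1) : Mor C :=
  ⟨f.1, g.2.1, f.2.2 ≫ eqToHom h.symm ≫ g.2.2⟩

/-- The action of a functor `s : D ⥤ C` on the set of morphisms. -/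
def sMor {D C : Type} [SmallCategory D] [SmallCategory C] (s : D ⥤ C) (f : Mor D) : Mor C :=
  ⟨s.obj f.1, s.obj f.2.1, s.map f.2.2⟩

/-- The category algebra `kD`, as a `k`-vector space with basis `Mor D`. -/
abbrev CatAlg (D : Type) [SmallCategory D] : Type := Mor D →₀ k

/-- Product of two basis elements of the category algebra. -/
noncomputable def catMulSingle {D : Type} [SmallCategory D] [DecidableEq D]
    (g f : Mor D) : CatAlg k D :=
  if h : g.1 = f.2.1 then Finsupp.single (compMor g f h) 1 else 0

/-- The multiplication of the category algebra, as a bilinear map. -/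
noncomputable def catMulL {D : Type} [SmallCategory D] [DecidableEq D] :
    CatAlg k D →ₗ[k] CatAlg k D →ₗ[k] CatAlg k D :=
  Finsupp.lsum k fun g => LinearMap.toSpanSingleton k _
    (Finsupp.lsum k fun f => LinearMap.toSpanSingleton k _ (catMulSingle k g f))

/-- The identity `∑_{x ∈ Ob D} 1_x` of the category algebra. -/
noncomputable def catOne (D : Type) [SmallCategory D] [Fintype D] : CatAlg k D :=
  ∑ x : D, Finsupp.single ⟨x, x, 𝟙 x⟩ 1

variable (s : D ⥤ C)

/-- `Id_x = { f ∈ Mor D ∣ s(f) = 1_{s(x)} }` (such `f` are endomorphisms of `x`, since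
`s` is injective on objects). -/
def IdC (x : D) : Set (x ⟶ x) := {f | s.map f = 𝟙 (s.obj x)}

/-- `𝒮 = { ∑_{x ∈ Ob D} f_x ∣ f_x ∈ Id_x } ⊆ kD`. -/
def SMonSet : Set (CatAlg k D) :=
  {a | ∃ F : ∀ x : D, x ⟶ x, (∀ x, F x ∈ IdC D C s x) ∧
    a = ∑ x : D, Finsupp.single ⟨x, x, F x⟩ 1}

/-- Condition (*): for every `f : x ⟶ y` in `D`, the `∼ₛ`-class of `f` equals
`Id_y ∘ f` and equals `f ∘ Id_x`. -/
def StarCond : Prop :=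
  ∀ (x y : D) (f : x ⟶ y) (g : Mor D),
    (sMor s g = sMor s ⟨x, y, f⟩ ↔ ∃ h : y ⟶ y, h ∈ IdC D C s y ∧ g = ⟨x, y, f ≫ h⟩) ∧
    (sMor s g = sMor s ⟨x, y, f⟩ ↔ ∃ h : x ⟶ x, h ∈ IdC D C s x ∧ g = ⟨x, y, h ≫ f⟩)

/-! For `a = ∑ₓ Fₓ ∈ 𝒮` and a morphism `f : x ⟶ y`, the products `a·f` and `f·a` are the
single morphisms `f ≫ F y` and `F x ≫ f`. Both lie in the `∼ₛ`-class of `f`, so condition (*)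
rewrites them as `h ≫ f` and `f ≫ h'` with `h ∈ Id_x`, `h' ∈ Id_y`. The element of `𝒮` that is
`h` (resp. `h'`) at `x` (resp. `y`) and the identity elsewhere is then the required `a'` (`a''`). -/

lemma catMulL_single_single {D' : Type} [SmallCategory D'] [DecidableEq D'] (g f : Mor D') :
    catMulL k (Finsupp.single g (1 : k)) (Finsupp.single f 1) = catMulSingle k g f := by
  simp [catMulL]

lemma catMulL_sum_endo_single {D' : Type} [SmallCategory D'] [Fintype D'] [DecidableEq D']
    (F : ∀ x : D', x ⟶ x) {x y : D'} (φ : x ⟶ y) :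
    catMulL k (∑ z : D', Finsupp.single ⟨z, z, F z⟩ (1 : k))
        (Finsupp.single ⟨x, y, φ⟩ 1) =
      Finsupp.single ⟨x, y, φ ≫ F y⟩ 1 := by
  simp only [map_sum, LinearMap.coe_sum, Finset.sum_apply, catMulL_single_single]
  rw [Finset.sum_eq_single y (fun z _ hz => by rw [catMulSingle, dif_neg hz]) (by simp)]
  simp [catMulSingle, compMor]

lemma catMulL_single_sum_endo {D' : Type} [SmallCategory D'] [Fintype D'] [DecidableEq D']
    (F : ∀ x : D', x ⟶ x) {x y : D'} (φ : x ⟶ y) :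
    catMulL k (Finsupp.single ⟨x, y, φ⟩ (1 : k))
        (∑ z : D', Finsupp.single ⟨z, z, F z⟩ 1) =
      Finsupp.single ⟨x, y, F x ≫ φ⟩ 1 := by
  simp only [map_sum, catMulL_single_single]
  rw [Finset.sum_eq_single x (fun z _ hz => by rw [catMulSingle, dif_neg (Ne.symm hz)])
    (by simp)]
  simp [catMulSingle, compMor]

section IdC

variable {D' C' : Type} [SmallCategory D'] [SmallCategory C'] {s' : D' ⥤ C'}

lemma id_mem_IdC (x : D') : 𝟙 x ∈ IdC D' C' s' x :=
  s'.map_id x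

lemma sMor_comp_mem_IdC {x y : D'} (φ : x ⟶ y) {e : y ⟶ y} (he : e ∈ IdC D' C' s' y) :
    sMor s' ⟨x, y, φ ≫ e⟩ = sMor s' ⟨x, y, φ⟩ := by
  simp [sMor, he.out]

lemma sMor_mem_IdC_comp {x y : D'} (φ : x ⟶ y) {e : x ⟶ x} (he : e ∈ IdC D' C' s' x) :
    sMor s' ⟨x, y, e ≫ φ⟩ = sMor s' ⟨x, y, φ⟩ := by
  simp [sMor, he.out]

lemma update_id_mem_IdC [DecidableEq D'] {x₀ : D'} {h : x₀ ⟶ x₀}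
    (hh : h ∈ IdC D' C' s' x₀) :
    ∀ x, Function.update (𝟙 ·) x₀ h x ∈ IdC D' C' s' x :=
  (Function.forall_update_iff _ fun x g => g ∈ IdC D' C' s' x).2 ⟨hh, fun x _ => id_mem_IdC x⟩

lemma StarCond.exists_mem_IdC_comp_eq (hstar : StarCond D' C' s') {x y : D'} (φ : x ⟶ y)
    {e : y ⟶ y} (he : e ∈ IdC D' C' s' y) : ∃ h ∈ IdC D' C' s' x, φ ≫ e = h ≫ φ := by
  obtain ⟨h, hh, heq⟩ := ((hstar x y φ _).2).1 (sMor_comp_mem_IdC φ he)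
  exact ⟨h, hh, by simpa using heq⟩

lemma StarCond.exists_comp_mem_IdC_eq (hstar : StarCond D' C' s') {x y : D'} (φ : x ⟶ y)
    {e : x ⟶ x} (he : e ∈ IdC D' C' s' x) : ∃ h ∈ IdC D' C' s' y, e ≫ φ = φ ≫ h := by
  obtain ⟨h, hh, heq⟩ := ((hstar x y φ _).1).1 (sMor_mem_IdC_comp φ he)
  exact ⟨h, hh, by simpa using heq⟩

end IdC

theorem SMonSet_commutes_with_morphisms (hstar : StarCond D C s) :
    ∀ (f : Mor D), ∀ a ∈ SMonSet k D C s,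
      (∃ a' ∈ SMonSet k D C s,
        catMulL k a (Finsupp.single f 1) = catMulL k (Finsupp.single f 1) a') ∧
      (∃ a'' ∈ SMonSet k D C s,
        catMulL k (Finsupp.single f 1) a = catMulL k a'' (Finsupp.single f 1)) := by
  rintro ⟨x, y, φ⟩ a ⟨F, hF, rfl⟩
  obtain ⟨h, hh, hφh⟩ := hstar.exists_mem_IdC_comp_eq φ (hF y)
  obtain ⟨h', hh', hφh'⟩ := hstar.exists_comp_mem_IdC_eq φ (hF x)
  refine ⟨⟨_, ⟨_, update_id_mem_IdC hh, rfl⟩, ?_⟩,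
    ⟨_, ⟨_, update_id_mem_IdC hh', rfl⟩, ?_⟩⟩
  · rw [catMulL_sum_endo_single, catMulL_single_sum_endo, Function.update_self, hφh]
  · rw [catMulL_single_sum_endo, catMulL_sum_endo_single, Function.update_self, hφh']
end

section
/- Assume condition (*): for every f : x → y in D, {g : s(g)=s(f)} = Id_y ∘ f = f ∘ Id_x. Then for m ∈ S(x), the following are equivalent: (a) m ∈ M_S(x), i.e., S(f)(m) = S(g)(m) for all f with d(f)=x and all g with s(g)=s(f); (b) S(h)(m) = m for every h ∈ Id_x. -/
open CategoryTheory

variable (k : Type) [Field k]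

variable (D : Type) [SmallCategory D] [Fintype D] [DecidableEq D]
  [∀ x y : D, Fintype (x ⟶ y)] [∀ x y : D, DecidableEq (x ⟶ y)]
variable (C : Type) [SmallCategory C] [Fintype C] [DecidableEq C]
  [∀ x y : C, Fintype (x ⟶ y)] [∀ x y : C, DecidableEq (x ⟶ y)]

variable (s : D ⥤ C)

variable (S : D ⥤ AlgCat k)

/-- `M_S(x)`: the set of `m ∈ S(x)` such that `S(f)(m) = S(g)(m)` for all `f` with
`d(f) = x` and all `g` with `s(g) = s(f)`. -/
def MS (x : D) : Set (S.obj x) :=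
  {m | ∀ (y z : D) (f : x ⟶ y) (g : x ⟶ z),
    sMor s ⟨x, y, f⟩ = sMor s ⟨x, z, g⟩ →
    (⟨y, S.map f m⟩ : Σ w : D, S.obj w) = ⟨z, S.map g m⟩}

section

variable {k : Type} [Field k] {D C : Type} [SmallCategory D] [SmallCategory C]
  {s : D ⥤ C} {S : D ⥤ AlgCat k}

theorem sMor_id_eq_sMor_of_mem_IdC {x : D} {h : x ⟶ x} (hh : h ∈ IdC D C s x) :
    sMor s ⟨x, x, 𝟙 x⟩ = sMor s ⟨x, x, h⟩ := by
  simp only [sMor, s.map_id]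
  exact congrArg _ (congrArg _ hh.symm)

theorem map_eq_self_of_mem_MS {x : D} {m : S.obj x} (hm : m ∈ MS k D C s S x)
    {h : x ⟶ x} (hh : h ∈ IdC D C s x) : S.map h m = m := by
  have hid := hm x x (𝟙 x) h (sMor_id_eq_sMor_of_mem_IdC hh)
  simpa using (eq_of_heq (Sigma.mk.inj_iff.mp hid).2).symm

theorem mem_MS_of_map_eq_self (hstar : StarCond D C s) {x : D} {m : S.obj x}
    (hfix : ∀ h ∈ IdC D C s x, S.map h m = m) : m ∈ MS k D C s S x := by
  intro y z f g hfg
  obtain ⟨h, hh, hg⟩ := ((hstar x y f ⟨x, z, g⟩).2).mp hfg.symm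
  obtain rfl : z = y := congrArg (fun a : Mor D => a.2.1) hg
  obtain rfl : g = h ≫ f := by simpa using hg
  rw [S.map_comp, ConcreteCategory.comp_apply, hfix h hh]

end

theorem mem_MS_iff_fixed_by_IdC (hstar : StarCond D C s) (x : D) (m : S.obj x) :
    m ∈ MS k D C s S x ↔ ∀ h ∈ IdC D C s x, S.map h m = m :=
  ⟨fun hm _ hh => map_eq_self_of_mem_MS hm hh, mem_MS_of_map_eq_self hstar⟩
end

section
/- Let (C, σ) be an interior kD-algebra. Then IndP^C_{s,D}(C) := (k ⊗_{kS} C)^S, the S-fixed points of the (kS,kS)-bimodule k ⊗_{kS} C (with k acted on through the augmentation ε and C through σ), is a unital k-algebra under the pointwise multiplication (a₁⊗c₁)(a₂⊗c₂) = a₁a₂ ⊗ c₁c₂, with identity 1 ⊗ 1_C. -/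
open CategoryTheory

variable (k : Type) [Field k]

variable (D : Type) [SmallCategory D] [Fintype D] [DecidableEq D]
  [∀ x y : D, Fintype (x ⟶ y)] [∀ x y : D, DecidableEq (x ⟶ y)]
variable (C : Type) [SmallCategory C] [Fintype C] [DecidableEq C]
  [∀ x y : C, Fintype (x ⟶ y)] [∀ x y : C, DecidableEq (x ⟶ y)]

variable (s : D ⥤ C)

variable (E : Type) [Ring E] [Algebra k E] (σ : CatAlg k D →ₗ[k] E)

/-- The submodule of relations defining `k ⊗_{k𝒮} C` as a quotient of `C` (note that
`ε(s) = 1` for `s ∈ 𝒮`, so `k ⊗_{k𝒮} C ≅ C / span{σ(s)·c - c}`). -/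
def relJ : Submodule k E :=
  Submodule.span k {y : E | ∃ a ∈ SMonSet k D C s, ∃ c : E, y = σ a * c - c}

/-- `k ⊗_{k𝒮} C`, realized as the quotient `C / J`. -/
abbrev QuotQ : Type := E ⧸ relJ k D C s E σ

/-- The canonical projection `C → k ⊗_{k𝒮} C`, `c ↦ 1 ⊗ c`. -/
noncomputable def mkQ : E →ₗ[k] QuotQ k D C s E σ := (relJ k D C s E σ).mkQ

/-- The `𝒮`-fixed points of `k ⊗_{k𝒮} C` under the right action `(1 ⊗ c)·s = 1 ⊗ cσ(s)`:
`q` is fixed iff for every representative `c` of `q` and every `s ∈ 𝒮`,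
`1 ⊗ cσ(s) = q`. -/
def FixQ : Set (QuotQ k D C s E σ) :=
  {q | ∀ a ∈ SMonSet k D C s, ∀ c : E, mkQ k D C s E σ c = q →
    mkQ k D C s E σ (c * σ a) = q}

/-!
The relations `σ(s)c - c` span a right ideal `J` of `C`, and left multiplication by a
representative `c` of a fixed point preserves `J`, because
`c (σ(s) d - d) = (c σ(s) - c) d` with `c σ(s) - c ∈ J`. Hence the product of `C` descends to
the fixed points, and associativity and the unit are inherited from `C`.
-/

section

variable {k : Type} [Field k] {D : Type} [SmallCategory D] [Fintype D] {C : Type}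
  [SmallCategory C] {s : D ⥤ C} {E : Type} [Ring E] [Algebra k E] {σ : CatAlg k D →ₗ[k] E}

lemma mkQ_eq_mkQ_iff {c c' : E} :
    mkQ k D C s E σ c = mkQ k D C s E σ c' ↔ c - c' ∈ relJ k D C s E σ :=
  Submodule.Quotient.eq _

lemma relJ_mul_mem {y : E} (hy : y ∈ relJ k D C s E σ) (e : E) :
    y * e ∈ relJ k D C s E σ := by
  induction hy using Submodule.span_induction with
  | mem y hy =>
    obtain ⟨a, ha, c, rfl⟩ := hy
    exact Submodule.subset_span ⟨a, ha, c * e, by noncomm_ring⟩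
  | zero => simp
  | add y z _ _ hy hz => simpa [add_mul] using add_mem hy hz
  | smul r y _ hy => simpa [smul_mul_assoc] using Submodule.smul_mem _ r hy

lemma mkQ_mul_right_congr {c c' : E} (h : mkQ k D C s E σ c = mkQ k D C s E σ c') (e : E) :
    mkQ k D C s E σ (c * e) = mkQ k D C s E σ (c' * e) := by
  rw [mkQ_eq_mkQ_iff] at h ⊢
  simpa [sub_mul] using relJ_mul_mem h e

lemma mkQ_mem_FixQ_iff {c : E} :
    mkQ k D C s E σ c ∈ FixQ k D C s E σ ↔
      ∀ a ∈ SMonSet k D C s, c * σ a - c ∈ relJ k D C s E σ := by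
  refine ⟨fun hc a ha => mkQ_eq_mkQ_iff.mp (hc a ha c rfl), fun hc a ha c' hc' => ?_⟩
  rw [mkQ_mul_right_congr hc' (σ a)]
  exact mkQ_eq_mkQ_iff.mpr (hc a ha)

lemma mul_mem_relJ_of_mkQ_mem_FixQ {c : E} (hc : mkQ k D C s E σ c ∈ FixQ k D C s E σ)
    {y : E} (hy : y ∈ relJ k D C s E σ) : c * y ∈ relJ k D C s E σ := by
  induction hy using Submodule.span_induction with
  | mem y hy =>
    obtain ⟨a, ha, d, rfl⟩ := hy
    have hcd : c * (σ a * d - d) = (c * σ a - c) * d := by noncomm_ring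
    rw [hcd]
    exact relJ_mul_mem (mkQ_mem_FixQ_iff.mp hc a ha) d
  | zero => simp
  | add y z _ _ hy hz => simpa [mul_add] using add_mem hy hz
  | smul r y _ hy => simpa [mul_smul_comm] using Submodule.smul_mem _ r hy

lemma mkQ_mul_left_congr {c : E} (hc : mkQ k D C s E σ c ∈ FixQ k D C s E σ) {e e' : E}
    (h : mkQ k D C s E σ e = mkQ k D C s E σ e') :
    mkQ k D C s E σ (c * e) = mkQ k D C s E σ (c * e') := by
  rw [mkQ_eq_mkQ_iff] at h ⊢
  simpa [mul_sub] using mul_mem_relJ_of_mkQ_mem_FixQ hc h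

lemma mkQ_mul_congr {c₁ c₁' c₂ c₂' : E} (hc₁ : mkQ k D C s E σ c₁ ∈ FixQ k D C s E σ)
    (h₁ : mkQ k D C s E σ c₁ = mkQ k D C s E σ c₁')
    (h₂ : mkQ k D C s E σ c₂ = mkQ k D C s E σ c₂') :
    mkQ k D C s E σ (c₁ * c₂) = mkQ k D C s E σ (c₁' * c₂') := by
  rw [mkQ_mul_right_congr h₁, mkQ_mul_left_congr (h₁ ▸ hc₁) h₂]

lemma mkQ_mul_mem_FixQ {c₁ c₂ : E} (hc₁ : mkQ k D C s E σ c₁ ∈ FixQ k D C s E σ)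
    (hc₂ : mkQ k D C s E σ c₂ ∈ FixQ k D C s E σ) :
    mkQ k D C s E σ (c₁ * c₂) ∈ FixQ k D C s E σ := by
  refine mkQ_mem_FixQ_iff.mpr fun a ha => ?_
  have h := mul_mem_relJ_of_mkQ_mem_FixQ hc₁ (mkQ_mem_FixQ_iff.mp hc₂ a ha)
  rwa [mul_sub, ← mul_assoc] at h

lemma mkQ_one_mem_FixQ : mkQ k D C s E σ 1 ∈ FixQ k D C s E σ :=
  mkQ_mem_FixQ_iff.mpr fun a ha => Submodule.subset_span ⟨a, ha, 1, by simp⟩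

end

theorem IndP_is_algebra :
    -- the pointwise multiplication is well defined on the fixed points
    (∀ c₁ c₁' c₂ c₂' : E,
      mkQ k D C s E σ c₁ ∈ FixQ k D C s E σ → mkQ k D C s E σ c₂ ∈ FixQ k D C s E σ →
      mkQ k D C s E σ c₁ = mkQ k D C s E σ c₁' → mkQ k D C s E σ c₂ = mkQ k D C s E σ c₂' →
      mkQ k D C s E σ (c₁ * c₂) = mkQ k D C s E σ (c₁' * c₂')) ∧
    -- the fixed points are closed under it
    (∀ c₁ c₂ : E,
      mkQ k D C s E σ c₁ ∈ FixQ k D C s E σ → mkQ k D C s E σ c₂ ∈ FixQ k D C s E σ →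
      mkQ k D C s E σ (c₁ * c₂) ∈ FixQ k D C s E σ) ∧
    -- it is associative, and `1 ⊗ 1_C` is a two-sided identity of the fixed points
    (∀ c₁ c₂ c₃ : E, mkQ k D C s E σ ((c₁ * c₂) * c₃) = mkQ k D C s E σ (c₁ * (c₂ * c₃))) ∧
    mkQ k D C s E σ 1 ∈ FixQ k D C s E σ ∧
    (∀ c : E, mkQ k D C s E σ (1 * c) = mkQ k D C s E σ c ∧
      mkQ k D C s E σ (c * 1) = mkQ k D C s E σ c) :=
  ⟨fun _ _ _ _ hc₁ _ h₁ h₂ => mkQ_mul_congr hc₁ h₁ h₂,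
    fun _ _ hc₁ hc₂ => mkQ_mul_mem_FixQ hc₁ hc₂,
    fun c₁ c₂ c₃ => congrArg _ (mul_assoc c₁ c₂ c₃),
    mkQ_one_mem_FixQ,
    fun c => ⟨congrArg _ (one_mul c), congrArg _ (mul_one c)⟩⟩
end
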